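/- Let W be a type, S a subset of W, and f, g : W → [0,1]. If ⨆_{w ∈ S} g w < ⨆_{w ∈ S} f w, then ⨆_{w ∈ S} (((f w) ⇒ (g w)) ⇒ (g w)) = 1. (This is the semantic content of Lemma 4.4: if u(◇φ) = α > 0 and δ' = (φ → ⋁Δ) → ⋁Δ where ⋁Δ is a disjunction whose value at every world lies below the diamond values dominated by α, then u(◇δ') = 1.) -/
import Mathlib


open unitInterval

instance : Fact ((0:ℝ) ≤ 1) := ⟨zero_le_one⟩

noncomputable instance : CompleteLattice unitInterval := Set.Icc.completeLattice

/-- Gödel implication on the unit interval. -/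
noncomputable def gimp (a b : unitInterval) : unitInterval := if a ≤ b then 1 else b

infixr:60 " ⇒ " => gimp

/-- Gödel negation on the unit interval. -/
noncomputable def gneg (a : unitInterval) : unitInterval := a ⇒ 0

theorem diamond_delta_prime {W : Type*} (S : Set W) (f g : W → unitInterval)
    (h : (⨆ w ∈ S, g w) < ⨆ w ∈ S, f w) :
    (⨆ w ∈ S, (((f w) ⇒ (g w)) ⇒ (g w))) = 1 := by
  obtain ⟨w, hwS, hlt⟩ : ∃ w ∈ S, (⨆ w ∈ S, g w) < f w := by
    by_contra hc
    push_neg at hc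
    exact absurd (iSup₂_le hc) (not_le.mpr h)
  have hgle : g w ≤ ⨆ w ∈ S, g w := le_biSup g hwS
  have hfg : ¬ f w ≤ g w := not_le.mpr (lt_of_le_of_lt hgle hlt)
  have h1 : (((f w) ⇒ (g w)) ⇒ (g w)) = 1 := by
    simp [gimp, hfg]
  apply le_antisymm
  · exact iSup₂_le fun v _ => le_one'
  · rw [← h1]
    exact le_biSup (fun v => ((f v) ⇒ (g v)) ⇒ (g v)) hwS
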